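/- Let g : ℂ → ℂ be analytic at p ∈ ℂ with g(p) ≠ 0, let β be a positive natural number, and define W(s) = g(s)/(s−p)^β, so that W has a pole of order β at p. Then for any two real angles θ₁, θ₂, the quotient W(p + r·e^{iθ₁}) / W(p + r·e^{iθ₂}) tends to e^{iβ(θ₂−θ₁)} as the real number r tends to 0 from above. (This is the limiting form of the paper's Theorem 1.16 and Theorem 1.20: the phase of W along a ray of inclination θ emanating from a pole of order β differs between two rays by β(θ₂−θ₁), so the degree of the root locus originating from a pole strictly and monotonously increases clockwise in the angle of origination.) -/

import Mathlib

open Filter Topology Complex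

/-! Near the pole, `W (p + r u) = g (p + r u) / (r u) ^ β`. In the quotient along two directions
`u₁`, `u₂` the factor `r ^ β` cancels exactly, leaving `g (p + r u₁) / g (p + r u₂) * (u₂ / u₁) ^ β`,
and the first factor tends to `g p / g p = 1` by continuity of `g`. -/

lemma tendsto_add_ofReal_mul_nhdsNE_zero (p u : ℂ) :
    Tendsto (fun r : ℝ => p + r * u) (𝓝[≠] 0) (𝓝 p) := by
  have h : Continuous (fun r : ℝ => p + r * u) := by fun_prop
  simpa using (h.tendsto 0).mono_left nhdsWithin_le_nhds

lemma div_mul_pow_div_div_mul_pow {K : Type*} [Field K] {r u₁ : K} (hr : r ≠ 0) (hu₁ : u₁ ≠ 0)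
    (a b u₂ : K) (β : ℕ) :
    a / (r * u₁) ^ β / (b / (r * u₂) ^ β) = a / b * (u₂ / u₁) ^ β := by
  rw [div_div_eq_mul_div, mul_pow, mul_pow, div_pow]
  field_simp

lemma tendsto_pole_quotient_along_rays {g : ℂ → ℂ} {p : ℂ} (hg : ContinuousAt g p)
    (hgp : g p ≠ 0) (β : ℕ) {u₁ : ℂ} (hu₁ : u₁ ≠ 0) (u₂ : ℂ) :
    Tendsto (fun r : ℝ =>
        g (p + r * u₁) / (p + r * u₁ - p) ^ β / (g (p + r * u₂) / (p + r * u₂ - p) ^ β))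
      (𝓝[≠] 0) (𝓝 ((u₂ / u₁) ^ β)) := by
  have hg_ratio : Tendsto (fun r : ℝ => g (p + r * u₁) / g (p + r * u₂)) (𝓝[≠] 0) (𝓝 1) := by
    simpa [div_self hgp, Function.comp_def, Pi.div_def] using
      (hg.tendsto.comp (tendsto_add_ofReal_mul_nhdsNE_zero p u₁)).div
        (hg.tendsto.comp (tendsto_add_ofReal_mul_nhdsNE_zero p u₂)) hgp
  have h_lim := hg_ratio.mul_const ((u₂ / u₁) ^ β)
  rw [one_mul] at h_lim
  refine h_lim.congr' ?_
  filter_upwards [self_mem_nhdsWithin] with r (hr : r ≠ 0)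
  simp only [add_sub_cancel_left]
  exact (div_mul_pow_div_div_mul_pow (ofReal_ne_zero.mpr hr) hu₁ _ _ _ _).symm

theorem pole_ray_phase_difference_general (g : ℂ → ℂ) (p : ℂ) (hg : AnalyticAt ℂ g p)
    (hgp : g p ≠ 0) (β : ℕ) (W : ℂ → ℂ)
    (hW : ∀ s, W s = g s / (s - p) ^ β) (θ₁ θ₂ : ℝ) :
    Tendsto (fun r : ℝ =>
        W (p + r * Complex.exp (θ₁ * Complex.I)) / W (p + r * Complex.exp (θ₂ * Complex.I)))
      (𝓝[>] 0) (𝓝 (Complex.exp ((β : ℂ) * ((θ₂ : ℂ) - θ₁) * Complex.I))) := by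
  have h_phase : (Complex.exp (θ₂ * Complex.I) / Complex.exp (θ₁ * Complex.I)) ^ β
      = Complex.exp ((β : ℂ) * ((θ₂ : ℂ) - θ₁) * Complex.I) := by
    rw [← Complex.exp_sub, ← Complex.exp_nat_mul]
    ring_nf
  simp_rw [hW, ← h_phase]
  exact (tendsto_pole_quotient_along_rays hg.continuousAt hgp β (Complex.exp_ne_zero _) _).mono_left
    (nhdsGT_le_nhdsNE 0)

/-- Limiting form of the paper's Theorems 1.16 and 1.20: for `W s = g s / (s - p) ^ β`
with a pole of order `β` at `p`, the quotient of values of `W` along two rays of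
inclinations `θ₁`, `θ₂` emanating from `p` tends to `exp (i β (θ₂ - θ₁))` as the
radius `r` tends to `0` from above. -/
theorem pole_ray_phase_difference (g : ℂ → ℂ) (p : ℂ) (hg : AnalyticAt ℂ g p)
    (hgp : g p ≠ 0) (β : ℕ) (hβ : 0 < β) (W : ℂ → ℂ)
    (hW : ∀ s, W s = g s / (s - p) ^ β) (θ₁ θ₂ : ℝ) :
    Tendsto (fun r : ℝ =>
        W (p + r * Complex.exp (θ₁ * Complex.I)) / W (p + r * Complex.exp (θ₂ * Complex.I)))
      (𝓝[>] 0) (𝓝 (Complex.exp ((β : ℂ) * ((θ₂ : ℂ) - θ₁) * Complex.I))) :=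
  pole_ray_phase_difference_general g p hg hgp β W hW θ₁ θ₂
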